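/- Define Dψ : [0,1] → ℝ by Dψ(x) = 2x for 0 ≤ x ≤ 1/4, Dψ(x) = 1 − 2x for 1/4 < x < 3/4, and Dψ(x) = 2x − 2 for 3/4 ≤ x ≤ 1 (the derivative of the bell-shaped potential), and define the bell opinion vector field on triples by F(o)ᵢ = Σ_{j≠i} Dψ(|o_i − o_j|)·sign(o_j − o_i), where a summand is 0 when o_i = o_j. Then for every (o₁,o₂,o₃) with 0 ≤ o₁ < o₂ < o₃ ≤ 1, one has F(o₁,o₂,o₃) = 0 if and only if either o₂ − o₁ = o₃ − o₂ = 1/3, or o₂ − o₁ = o₃ − o₂ = 1/2. In particular the set {(o − 1/3, o, o + 1/3) : o ∈ [1/3, 2/3]} is a line segment of non-consensus, non-polarized fixed points. -/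
import Mathlib


/-- Derivative of the bell-shaped potential `ψ(x) = x²` on `[0,1/4]`,
`ψ(x) = −(x−1/2)² + 1/8` on `(1/4,3/4)`, `ψ(x) = (x−1)²` on `[3/4,1]`. -/
noncomputable def Dpsi (x : ℝ) : ℝ :=
  if x ≤ 1/4 then 2 * x
  else if x < 3/4 then 1 - 2 * x
  else 2 * x - 2

/-- The bell opinion vector field on triples:
`F(o)ᵢ = Σ_{j≠i} Dψ(|o_i − o_j|)·sign(o_j − o_i)` (a summand vanishes when
`o_i = o_j` since `sign 0 = 0`). -/
noncomputable def bellField (o : Fin 3 → ℝ) : Fin 3 → ℝ :=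
  fun i => ∑ j ∈ Finset.univ.erase i, Dpsi |o i - o j| * Real.sign (o j - o i)

lemma field_eq (o₁ o₂ o₃ : ℝ) (h12 : o₁ < o₂) (h23 : o₂ < o₃) :
    bellField ![o₁, o₂, o₃] = 0 ↔
      (Dpsi (o₂ - o₁) + Dpsi (o₃ - o₁) = 0 ∧ Dpsi (o₃ - o₂) - Dpsi (o₂ - o₁) = 0 ∧
        Dpsi (o₃ - o₁) + Dpsi (o₃ - o₂) = 0) := by
  have h13 : o₁ < o₃ := h12.trans h23
  have e0 : (Finset.univ.erase (0 : Fin 3)) = {1, 2} := by decide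
  have e1 : (Finset.univ.erase (1 : Fin 3)) = {0, 2} := by decide
  have e2 : (Finset.univ.erase (2 : Fin 3)) = {0, 1} := by decide
  constructor
  · intro h
    have h0 := congrFun h 0
    have h1 := congrFun h 1
    have h2 := congrFun h 2
    simp [bellField, e0, e1, e2, Finset.sum_insert, Finset.sum_singleton,
      Real.sign_of_pos, Real.sign_of_neg, sub_pos, sub_neg, h12, h23, h13,
      abs_of_neg, abs_of_pos, neg_sub] at h0 h1 h2
    refine ⟨by linarith, by linarith, by linarith⟩
  · rintro ⟨ha, hb, hc⟩
    funext i
    fin_cases i <;>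
      simp [bellField, e0, e1, e2, Finset.sum_insert, Finset.sum_singleton,
        Real.sign_of_pos, Real.sign_of_neg, sub_pos, sub_neg, h12, h23, h13,
        abs_of_neg, abs_of_pos, neg_sub] <;> linarith

set_option maxHeartbeats 1000000 in
lemma core (a b : ℝ) (ha : 0 < a) (hb : 0 < b) (hab : a + b ≤ 1)
    (h1 : Dpsi a + Dpsi (a + b) = 0) (h2 : Dpsi b - Dpsi a = 0) :
    (a = 1/3 ∧ b = 1/3) ∨ (a = 1/2 ∧ b = 1/2) := by
  unfold Dpsi at h1 h2
  split_ifs at h1 h2 <;>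
    first
      | (left; constructor <;> linarith)
      | (right; constructor <;> linarith)
      | (exfalso; linarith)

/-- Theorem (bell-shaped potential): for ordered triples
`0 ≤ o₁ < o₂ < o₃ ≤ 1`, the bell opinion vector field vanishes iff the
opinions are equally spaced with common gap `1/3` or `1/2`.  In particular
`{(o − 1/3, o, o + 1/3) : o ∈ [1/3, 2/3]}` is a line segment of
non-consensus, non-polarized fixed points. -/
theorem bell_fixed_points (o₁ o₂ o₃ : ℝ) (h0 : 0 ≤ o₁) (h12 : o₁ < o₂)
    (h23 : o₂ < o₃) (h1 : o₃ ≤ 1) :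
    (bellField ![o₁, o₂, o₃] = 0 ↔
      (o₂ - o₁ = 1/3 ∧ o₃ - o₂ = 1/3) ∨ (o₂ - o₁ = 1/2 ∧ o₃ - o₂ = 1/2)) ∧
    (∀ o ∈ Set.Icc (1/3 : ℝ) (2/3),
      bellField ![o - 1/3, o, o + 1/3] = 0 ∧
      ¬ (o - 1/3 = o ∧ o = o + 1/3) ∧
      ¬ (∀ i : Fin 3, (![o - 1/3, o, o + 1/3]) i = 0 ∨
                      (![o - 1/3, o, o + 1/3]) i = 1)) := by
  constructor
  · rw [field_eq o₁ o₂ o₃ h12 h23]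
    constructor
    · rintro ⟨ha, hb, -⟩
      have hsum : o₂ - o₁ + (o₃ - o₂) = o₃ - o₁ := by ring
      have := core (o₂ - o₁) (o₃ - o₂) (by linarith) (by linarith) (by linarith)
        (by rw [hsum]; exact ha) hb
      tauto
    · rintro (⟨ha, hb⟩ | ⟨ha, hb⟩) <;>
      · have h13 : o₃ - o₁ = (o₂ - o₁) + (o₃ - o₂) := by ring
        rw [h13, ha, hb]
        norm_num [Dpsi]
  · rintro o ⟨ho1, ho2⟩
    refine ⟨?_, ?_, ?_⟩
    · rw [field_eq _ _ _ (by linarith) (by linarith)]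
      norm_num [Dpsi]
    · rintro ⟨h, -⟩; linarith
    · intro h
      have := h 1
      simp at this
      rcases this with h | h <;> linarith
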